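/- Let K ⊆ ℝ² be a bounded measurable set of positive Lebesgue measure, x_k ∈ ℝ², and {n, m} an orthonormal basis of ℝ². Define local coordinates y_n(x) = ⟨x − x_k, n⟩ and y_m(x) = ⟨x − x_k, m⟩, and let k be a segment of positive length contained in the line {x : y_n(x) = 0}, with arclength measure dL. Let ξ₁ = n, ξ₂ = m, ξ₃(x) = y_m(x) m, ξ₄(x) = y_m(x) n − y_n(x) m be the EFEM(1) enrichment modes. Then for each b ∈ {1, 2, 3, 4} there exists a unique test vector field of the form β_b(x) = (c₁ + c₂ y_n(x) + c₃ y_m(x)) n + (c₄ + c₅ y_n(x) + c₆ y_m(x)) m, with c₁, …, c₆ ∈ ℝ, such that ∫_K β_b · t dA = ∫_k ξ_b · t dL for every affine traction field t(x) = (t₁ + t₂ y_n(x) + t₃ y_m(x)) n + (t₄ + t₅ y_n(x) + t₆ y_m(x)) m, t₁, …, t₆ ∈ ℝ. -/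

import Mathlib

open MeasureTheory
open scoped RealInnerProductSpace

/-!
The coefficient vector `c` of `β_b` is tested against the affine tractions through the Gram
form `B c t = ∫_K ⟪β_c, β_t⟫ dA` (block-diagonal, with the moment matrix `A_K` in each block),
and the condition says that `B c` is the linear functional `t ↦ ∫_k ⟪ξ_b, t⟫ dL`. The form `B`
is positive definite: `B c c = 0` forces `β_c = 0` a.e. on `K`, so the two affine coefficient
functions of `β_c` vanish a.e. on a set of positive area; since an affine hyperplane is
Lebesgue-null, all six coefficients vanish. A positive definite form on a finite-dimensional
space identifies it with its dual, which gives existence and uniqueness.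
-/

/-- An affine (piecewise-linear) vector field written in the fracture-aligned frame:
`x ↦ (c₁ + c₂ yₙ + c₃ yₘ) n + (c₄ + c₅ yₙ + c₆ yₘ) m`, where
`yₙ(x) = ⟪x − x_k, n⟫` and `yₘ(x) = ⟪x − x_k, m⟫`. Both the EFEM(1) test vectors
and the affine traction fields have this form. -/
noncomputable def affineField (xk n m : EuclideanSpace ℝ (Fin 2)) (c : Fin 6 → ℝ)
    (x : EuclideanSpace ℝ (Fin 2)) : EuclideanSpace ℝ (Fin 2) :=
  (c 0 + c 1 * ⟪x - xk, n⟫ + c 2 * ⟪x - xk, m⟫) • n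
    + (c 3 + c 4 * ⟪x - xk, n⟫ + c 5 * ⟪x - xk, m⟫) • m

/-- The four EFEM(1) enrichment modes `ξ₁ = n`, `ξ₂ = m`, `ξ₃ = yₘ m`,
`ξ₄ = yₘ n − yₙ m`. -/
noncomputable def enrichMode (xk n m : EuclideanSpace ℝ (Fin 2)) :
    Fin 4 → EuclideanSpace ℝ (Fin 2) → EuclideanSpace ℝ (Fin 2) :=
  ![fun _ => n,
    fun _ => m,
    fun x => ⟪x - xk, m⟫ • m,
    fun x => ⟪x - xk, m⟫ • n - ⟪x - xk, n⟫ • m]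

namespace MeasureTheory

variable {V X E : Type*} [AddCommGroup V] [Module ℝ V] {_ : MeasurableSpace X}
  [NormedAddCommGroup E] [InnerProductSpace ℝ E]

noncomputable def gramForm (μ : Measure X) (f : V →ₗ[ℝ] X → E)
    (hf : ∀ v w, Integrable (fun x => ⟪f v x, f w x⟫) μ) : LinearMap.BilinForm ℝ V :=
  LinearMap.mk₂ ℝ (fun v w => ∫ x, ⟪f v x, f w x⟫ ∂μ)
    (fun v₁ v₂ w => by
      simp only [map_add, Pi.add_apply, inner_add_left]
      exact integral_add (hf _ _) (hf _ _))
    (fun c v w => by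
      simp only [map_smul, Pi.smul_apply, real_inner_smul_left]
      exact integral_const_mul _ _)
    (fun v w₁ w₂ => by
      simp only [map_add, Pi.add_apply, inner_add_right]
      exact integral_add (hf _ _) (hf _ _))
    (fun c v w => by
      simp only [map_smul, Pi.smul_apply, real_inner_smul_right]
      exact integral_const_mul _ _)

theorem gramForm_apply (μ : Measure X) (f : V →ₗ[ℝ] X → E)
    (hf : ∀ v w, Integrable (fun x => ⟪f v x, f w x⟫) μ) (v w : V) :
    gramForm μ f hf v w = ∫ x, ⟪f v x, f w x⟫ ∂μ :=
  rfl

theorem ae_eq_zero_of_gramForm_self_eq_zero {μ : Measure X} {f : V →ₗ[ℝ] X → E}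
    {hf : ∀ v w, Integrable (fun x => ⟪f v x, f w x⟫) μ} {v : V}
    (hv : gramForm μ f hf v v = 0) : f v =ᵐ[μ] 0 := by
  rw [gramForm_apply, integral_eq_zero_iff_of_nonneg (fun _ => real_inner_self_nonneg)
    (hf v v)] at hv
  filter_upwards [hv] with x hx using inner_self_eq_zero.1 hx

theorem gramForm_nondegenerate [FiniteDimensional ℝ V] {μ : Measure X} {f : V →ₗ[ℝ] X → E}
    (hf : ∀ v w, Integrable (fun x => ⟪f v x, f w x⟫) μ)
    (hf₀ : ∀ v, f v =ᵐ[μ] 0 → v = 0) : (gramForm μ f hf).Nondegenerate :=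
  .ofSeparatingLeft fun v hv => hf₀ v (ae_eq_zero_of_gramForm_self_eq_zero (hv v))

theorem existsUnique_forall_integral_inner_eq [FiniteDimensional ℝ V] (μ : Measure X)
    (f : V →ₗ[ℝ] X → E) (hf : ∀ v w, Integrable (fun x => ⟪f v x, f w x⟫) μ)
    (hf₀ : ∀ v, f v =ᵐ[μ] 0 → v = 0) (L : Module.Dual ℝ V) :
    ∃! v, ∀ w, ∫ x, ⟪f v x, f w x⟫ ∂μ = L w := by
  simpa only [LinearMap.ext_iff, LinearMap.BilinForm.toDual_def, gramForm_apply] using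
    ((gramForm μ f hf).toDual (gramForm_nondegenerate hf hf₀)).bijective.existsUnique L

noncomputable def integralInnerDual (μ : Measure X) (g : X → E) (f : V →ₗ[ℝ] X → E)
    (hg : ∀ w, Integrable (fun x => ⟪g x, f w x⟫) μ) : Module.Dual ℝ V where
  toFun w := ∫ x, ⟪g x, f w x⟫ ∂μ
  map_add' w₁ w₂ := by
    simp only [map_add, Pi.add_apply, inner_add_right]
    exact integral_add (hg _) (hg _)
  map_smul' c w := by
    simp only [map_smul, Pi.smul_apply, real_inner_smul_right]
    exact integral_const_mul _ _

end MeasureTheory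

section Hyperplane

variable {E : Type*} [NormedAddCommGroup E] [InnerProductSpace ℝ E] [FiniteDimensional ℝ E]
  [MeasurableSpace E] [BorelSpace E]

theorem measure_setOf_inner_add_eq_zero (μ : Measure E) [μ.IsAddHaarMeasure] {v : E}
    (hv : v ≠ 0) (α : ℝ) : μ {x | ⟪x, v⟫ + α = 0} = 0 := by
  have hv' : ⟪v, v⟫ ≠ 0 := inner_self_ne_zero.2 hv
  have hker : (ℝ ∙ v)ᗮ ≠ ⊤ := fun h =>
    hv' (Submodule.mem_orthogonal_singleton_iff_inner_right.1 (h ▸ Submodule.mem_top))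
  have hset : {x | ⟪x, v⟫ + α = 0} = (· + (α / ⟪v, v⟫) • v) ⁻¹' ((ℝ ∙ v)ᗮ : Set E) := by
    ext x
    simp only [Set.mem_ofPred_eq, Set.mem_preimage, SetLike.mem_coe,
      Submodule.mem_orthogonal_singleton_iff_inner_right, inner_add_right,
      real_inner_smul_right, real_inner_comm x v]
    field_simp
  rw [hset, measure_preimage_add_right]
  exact Measure.addHaar_submodule μ _ hker

theorem eq_zero_of_ae_inner_add_eq_zero {μ ν : Measure E} [ν.IsAddHaarMeasure] (hμν : μ ≪ ν)
    (hμ : μ ≠ 0) {v : E} {α : ℝ} (h : ∀ᵐ x ∂μ, ⟪x, v⟫ + α = 0) : v = 0 ∧ α = 0 := by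
  have := ae_neBot.2 hμ
  have hv : v = 0 := by
    by_contra hv
    have hnull : ∀ᵐ x ∂μ, ¬ (⟪x, v⟫ + α = 0) :=
      measure_eq_zero_iff_ae_notMem.1 (hμν (measure_setOf_inner_add_eq_zero ν hv α))
    obtain ⟨x, hx, hx'⟩ := (h.and hnull).exists
    exact hx' hx
  obtain ⟨x, hx⟩ := h.exists
  exact ⟨hv, by simpa [hv] using hx⟩

end Hyperplane

section Segment

variable {E F : Type*} [NormedAddCommGroup E] [NormedSpace ℝ E] [NormedAddCommGroup F]

theorem isCompact_segment (a b : E) : IsCompact (segment ℝ a b) := by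
  rw [segment_eq_image]
  exact isCompact_Icc.image (by fun_prop)

theorem Continuous.integrableOn_segment_hausdorffMeasure [MeasurableSpace E] [BorelSpace E]
    {f : E → F} (hf : Continuous f) (a b : E) : IntegrableOn f (segment ℝ a b) μH[1] :=
  hf.continuousOn.integrableOn_of_subset_isCompact (isCompact_segment a b)
    (isCompact_segment a b).isClosed.measurableSet subset_rfl
    (by rw [hausdorffMeasure_segment]; exact edist_ne_top a b)

end Segment

section AffineCoefficients

variable {E : Type*} [NormedAddCommGroup E] [InnerProductSpace ℝ E] [FiniteDimensional ℝ E]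
  [MeasurableSpace E] [BorelSpace E]

theorem eq_zero_of_ae_affine_eq_zero {xk n m : E} (hnm : LinearIndependent ℝ ![n, m])
    {μ ν : Measure E} [ν.IsAddHaarMeasure] (hμν : μ ≪ ν) (hμ : μ ≠ 0) {α β γ : ℝ}
    (h : ∀ᵐ x ∂μ, α + β * ⟪x - xk, n⟫ + γ * ⟪x - xk, m⟫ = 0) :
    α = 0 ∧ β = 0 ∧ γ = 0 := by
  have hform : ∀ x, α + β * ⟪x - xk, n⟫ + γ * ⟪x - xk, m⟫
      = ⟪x, β • n + γ • m⟫ + (α - ⟪xk, β • n + γ • m⟫) := fun x => by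
    simp only [inner_sub_left, inner_add_right, real_inner_smul_right]
    ring
  obtain ⟨hv, hα⟩ :=
    eq_zero_of_ae_inner_add_eq_zero hμν hμ (h.mono fun x hx => hform x ▸ hx)
  obtain ⟨rfl, rfl⟩ := LinearIndependent.pair_iff.1 hnm β γ hv
  simpa using hα

end AffineCoefficients

section AffineField

variable (xk n m : EuclideanSpace ℝ (Fin 2))

noncomputable def affineFieldₗ :
    (Fin 6 → ℝ) →ₗ[ℝ] EuclideanSpace ℝ (Fin 2) → EuclideanSpace ℝ (Fin 2) where
  toFun := affineField xk n m
  map_add' c d := by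
    ext1 x
    simp only [affineField, Pi.add_apply]
    module
  map_smul' r c := by
    ext1 x
    simp only [affineField, Pi.smul_apply, smul_eq_mul, RingHom.id_apply]
    module

theorem continuous_affineField (c : Fin 6 → ℝ) : Continuous (affineField xk n m c) := by
  unfold affineField
  fun_prop

theorem continuous_enrichMode (i : Fin 4) : Continuous (enrichMode xk n m i) := by
  fin_cases i <;>
    simp only [enrichMode, Fin.zero_eta, Fin.mk_one, Fin.reduceFinMk, Matrix.cons_val] <;>
    fun_prop

variable {xk n m}

theorem eq_zero_of_affineField_ae_eq_zero (hnm : LinearIndependent ℝ ![n, m])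
    {μ ν : Measure (EuclideanSpace ℝ (Fin 2))} [ν.IsAddHaarMeasure] (hμν : μ ≪ ν) (hμ : μ ≠ 0)
    {c : Fin 6 → ℝ} (h : affineField xk n m c =ᵐ[μ] 0) : c = 0 := by
  have hcoeff := h.mono fun x hx => LinearIndependent.pair_iff.1 hnm _ _ hx
  obtain ⟨h0, h1, h2⟩ := eq_zero_of_ae_affine_eq_zero hnm hμν hμ (hcoeff.mono fun _ hx => hx.1)
  obtain ⟨h3, h4, h5⟩ := eq_zero_of_ae_affine_eq_zero hnm hμν hμ (hcoeff.mono fun _ hx => hx.2)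
  ext j
  fin_cases j <;> assumption

end AffineField

theorem stmt_1_general
    (K : Set (EuclideanSpace ℝ (Fin 2)))
    (hKb : Bornology.IsBounded K) (hKpos : 0 < volume K)
    (xk n m : EuclideanSpace ℝ (Fin 2))
    (hn : ‖n‖ = 1) (hm : ‖m‖ = 1) (hnm : ⟪n, m⟫ = 0)
    (a b : EuclideanSpace ℝ (Fin 2))
    (i : Fin 4) :
    ∃! c : Fin 6 → ℝ, ∀ t : Fin 6 → ℝ,
      (∫ x in K, ⟪affineField xk n m c x, affineField xk n m t x⟫ ∂volume)
        = ∫ x in segment ℝ a b,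
            ⟪enrichMode xk n m i x, affineField xk n m t x⟫ ∂μH[1] := by
  have hind : LinearIndependent ℝ ![n, m] := by
    refine linearIndependent_of_ne_zero_of_inner_eq_zero (fun j => ?_) fun j l hjl => ?_
    · fin_cases j <;> simp [← norm_ne_zero_iff, hn, hm]
    · fin_cases j <;> fin_cases l <;> simp_all [real_inner_comm]
  have hcont := continuous_affineField xk n m
  exact existsUnique_forall_integral_inner_eq (volume.restrict K) (affineFieldₗ xk n m)
    (fun c t => ((hcont c).inner (hcont t)).continuousOn.integrableOn_compact
      hKb.isCompact_closure |>.mono_set subset_closure)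
    (fun c => eq_zero_of_affineField_ae_eq_zero hind
      Measure.restrict_le_self.absolutelyContinuous (Measure.restrict_eq_zero.not.2 hKpos.ne'))
    (integralInnerDual _ (enrichMode xk n m i) (affineFieldₗ xk n m) fun t =>
      ((continuous_enrichMode xk n m i).inner (hcont t)).integrableOn_segment_hausdorffMeasure a b)

/-- For a bounded measurable `K ⊆ ℝ²` of positive area, a fracture
segment `k = [a,b]` of positive length lying in the line `{yₙ = 0}`, and each
EFEM(1) enrichment mode `ξ_b`, there is a unique affine test vector field `β_b`
(with six coefficients) such that `∫_K β_b · t dA = ∫_k ξ_b · t dL` for every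
affine traction field `t`. -/
theorem stmt_1
    (K : Set (EuclideanSpace ℝ (Fin 2))) (hK : MeasurableSet K)
    (hKb : Bornology.IsBounded K) (hKpos : 0 < volume K)
    (xk n m : EuclideanSpace ℝ (Fin 2))
    (hn : ‖n‖ = 1) (hm : ‖m‖ = 1) (hnm : ⟪n, m⟫ = 0)
    (a b : EuclideanSpace ℝ (Fin 2)) (hab : a ≠ b)
    (hline : segment ℝ a b ⊆ {x | ⟪x - xk, n⟫ = 0})
    (i : Fin 4) :
    ∃! c : Fin 6 → ℝ, ∀ t : Fin 6 → ℝ,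
      (∫ x in K, ⟪affineField xk n m c x, affineField xk n m t x⟫ ∂volume)
        = ∫ x in segment ℝ a b,
            ⟪enrichMode xk n m i x, affineField xk n m t x⟫ ∂μH[1] :=
  stmt_1_general K hKb hKpos xk n m hn hm hnm a b i
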